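/- For almost every real number α (with respect to Lebesgue measure on ℝ): 2^n·α is not an integer multiple of π for any natural number n, and the set {cot(2^n·α) : n ∈ ℕ} is dense in ℝ. (Equivalently, with M = (0,1) and N = (0,−1), for almost all choices of a starting point Q₁ = (cot α, 0) on the x-axis, the closure of the sequence defined by Q_{j+1} = circumcenter(M, N, Q_j) is the entire x-axis.) -/

import Mathlib

/-!
The doubling map on `ℝ / πℤ` is ergodic for Haar measure, so almost every orbit enters each set
of a countable basis, i.e. is dense. The quotient map `ℝ → ℝ / πℤ` is quasi-measure-preserving, so
for almost every `α` the numbers `2ⁿα` are dense modulo `π`; since `cot` is `π`-periodic and maps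
`(0, π)` monotonically onto `ℝ`, their cotangents are dense in `ℝ`. The `α` with some `2ⁿα ∈ πℤ`
form a countable set.
-/

open Real MeasureTheory Set Filter Function TopologicalSpace

namespace Ergodic

variable {X : Type*} [MeasurableSpace X] {μ : Measure X} [IsFiniteMeasure μ] {f : X → X}

theorem ae_exists_iterate_mem (hf : Ergodic f μ) {s : Set X} (hs : MeasurableSet s)
    (hs₀ : μ s ≠ 0) : ∀ᵐ x ∂μ, ∃ n, f^[n] x ∈ s := by
  set A := ⋃ n, f^[n] ⁻¹' s
  have hA : MeasurableSet A := .iUnion fun n => hf.measurable.iterate n hs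
  have hfA : f ⁻¹' A ⊆ A := by
    simp only [A, preimage_iUnion, ← preimage_comp, ← iterate_succ]
    exact iUnion_subset fun n => subset_iUnion (fun n => f^[n] ⁻¹' s) (n + 1)
  rcases hf.ae_empty_or_univ_of_preimage_ae_le hA.nullMeasurableSet hfA.eventuallyLE with h | h
  · exact absurd (measure_mono_null (subset_iUnion (fun n => f^[n] ⁻¹' s) 0) (ae_eq_empty.1 h))
      hs₀
  · filter_upwards [measure_eq_zero_iff_ae_notMem.1 (ae_eq_univ.1 h)] with x hx
    simpa [A] using hx

theorem ae_denseRange_iterate [TopologicalSpace X] [SecondCountableTopology X]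
    [OpensMeasurableSpace X] [μ.IsOpenPosMeasure] (hf : Ergodic f μ) :
    ∀ᵐ x ∂μ, DenseRange fun n => f^[n] x := by
  obtain ⟨B, hBc, hB₀, hB⟩ := exists_countable_basis X
  have hvisit : ∀ᵐ x ∂μ, ∀ U ∈ B, ∃ n, f^[n] x ∈ U := (ae_ball_iff hBc).2 fun U hU =>
    hf.ae_exists_iterate_mem (hB.isOpen hU).measurableSet
      ((hB.isOpen hU).measure_ne_zero μ (nonempty_iff_ne_empty.2 fun h => hB₀ (h ▸ hU)))
  filter_upwards [hvisit] with x hx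
  refine hB.dense_iff.2 fun U hU _ => ?_
  obtain ⟨n, hn⟩ := hx U hU
  exact ⟨_, hn, n, rfl⟩

end Ergodic

namespace AddCircle

variable {T : ℝ} [Fact (0 < T)]

theorem quasiMeasurePreserving_coe :
    Measure.QuasiMeasurePreserving ((↑) : ℝ → AddCircle T) volume volume := by
  have hmeas : Measurable ((↑) : ℝ → AddCircle T) := QuotientAddGroup.measurable_coe
  refine ⟨hmeas, Measure.AbsolutelyContinuous.mk fun s hs hs₀ => ?_⟩
  have hcover : ⋃ k : ℤ, Ioc (k • T) (k • T + T) = univ := by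
    simpa [add_mul] using iUnion_Ioc_add_zsmul (Fact.out : 0 < T) 0
  rw [Measure.map_apply hmeas hs, ← inter_univ (_ ⁻¹' s), ← hcover, inter_iUnion]
  refine measure_iUnion_null fun k => ?_
  rw [← Measure.restrict_apply' measurableSet_Ioc,
    (AddCircle.measurePreserving_mk T (k • T)).measure_preimage hs.nullMeasurableSet, hs₀]

end AddCircle

namespace Real

theorem cot_eq_tan_pi_div_two_sub (x : ℝ) : cot x = tan (π / 2 - x) := by
  rw [tan_pi_div_two_sub, cot_eq_cos_div_sin, tan_eq_sin_div_cos, inv_div]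

theorem cot_periodic : Periodic cot π := fun x => by
  simp only [cot_eq_tan_pi_div_two_sub, sub_add_eq_sub_sub, tan_periodic.sub_eq]

theorem cot_mem_Ioo {p q x : ℝ} (hx : x ∈ Ioo (π / 2 - arctan q) (π / 2 - arctan p)) :
    cot x ∈ Ioo p q := by
  have hpq : arctan p < π / 2 - x ∧ π / 2 - x < arctan q := by constructor <;> linarith [hx.1, hx.2]
  have htan : arctan (tan (π / 2 - x)) = π / 2 - x := arctan_tan
    (by linarith [neg_pi_div_two_lt_arctan p]) (by linarith [arctan_lt_pi_div_two q])
  rw [cot_eq_tan_pi_div_two_sub]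
  constructor <;> rw [← arctan_strictMono.lt_iff_lt, htan]
  exacts [hpq.1, hpq.2]

instance : Fact (0 < π) := ⟨pi_pos⟩

theorem denseRange_cot_of_denseRange_coe {ι : Type*} {x : ι → ℝ}
    (hx : DenseRange fun i => (x i : AddCircle π)) : DenseRange fun i => cot (x i) := by
  refine dense_iff_exists_between.2 fun p q hpq => ?_
  have hlt : π / 2 - arctan q < π / 2 - arctan p := by linarith [arctan_strictMono hpq]
  obtain ⟨i, w, hw, hwi⟩ := hx.exists_mem_open
    (QuotientAddGroup.isOpenMap_coe _ isOpen_Ioo) ((nonempty_Ioo.2 hlt).image _)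
  obtain ⟨k, hk⟩ := AddSubgroup.mem_zmultiples_iff.1 (QuotientAddGroup.eq.1 hwi)
  have hcot : cot (x i) = cot w := by
    rw [show x i = w + k • π by rw [hk]; ring, cot_periodic.zsmul]
  refine ⟨cot (x i), mem_range_self i, ?_⟩
  rw [hcot]
  exact cot_mem_Ioo hw

end Real

theorem ae_cot_doubling_dense :
    ∀ᵐ α ∂(volume : Measure ℝ),
      (∀ n : ℕ, ∀ m : ℤ, (2 : ℝ) ^ n * α ≠ m * π) ∧
      Dense (Set.range fun n : ℕ => Real.cot ((2 : ℝ) ^ n * α)) := by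
  have hdoubling : Ergodic fun y : AddCircle π => 2 • y := AddCircle.ergodic_nsmul one_lt_two
  have horbit : ∀ᵐ α : ℝ, DenseRange fun n : ℕ => (((2 : ℝ) ^ n * α : ℝ) : AddCircle π) := by
    filter_upwards [AddCircle.quasiMeasurePreserving_coe.ae hdoubling.ae_denseRange_iterate]
      with α hα
    convert hα using 2 with n
    rw [smul_iterate]
    dsimp only
    rw [← AddCircle.coe_nsmul, nsmul_eq_mul, Nat.cast_pow, Nat.cast_ofNat]
  have hgeneric : ∀ᵐ α : ℝ, ∀ n : ℕ, ∀ m : ℤ, (2 : ℝ) ^ n * α ≠ m * π := by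
    simp only [ae_all_iff]
    intro n m
    filter_upwards [volume.ae_ne (m * π / 2 ^ n)] with α hα
    contrapose! hα
    field_simp
    linarith
  filter_upwards [hgeneric, horbit] with α hα hαorbit
  exact ⟨hα, denseRange_cot_of_denseRange_coe hαorbit⟩
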